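/- A language L ⊆ GS is accepted by some PNKA if and only if the NetKAT Myhill–Nerode relation ≡_L has only finitely many equivalence classes. -/
import Mathlib


namespace NetKATLearn

variable {F V : Type}

/-- A packet assigns a value to each field. -/
abbrev Packet (F V : Type) : Type := F → V

/-- A guarded string `(α, w, β)`, representing the trace `α·(w₁·dup)⋯(wₖ·dup)·β`. -/
abbrev GString (F V : Type) : Type := Packet F V × List (Packet F V) × Packet F V

/-- A guarded string prefix `(α, w)`. -/
abbrev GPrefix (F V : Type) : Type := Packet F V × List (Packet F V)

/-- A guarded string suffix `(m, β)`. -/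
abbrev GSuffix (F V : Type) : Type := List (Packet F V) × Packet F V

/-- `last(p)`: the last element of `w` if `w` is nonempty, and `α` otherwise. -/
def lastP (p : GPrefix F V) : Packet F V := p.2.getLast?.getD p.1

-- Partial concatenation `p ◆ g` of a prefix with a guarded string:
-- defined iff `last p = g.1`, in which case it is `(p.1, p.2 ++ g.2.1, g.2.2)`.
open Classical in
noncomputable def pconcat (p : GPrefix F V) (g : GString F V) : Option (GString F V) :=
  if lastP p = g.1 then some (p.1, p.2 ++ g.2.1, g.2.2) else none

/-- The NetKAT Myhill–Nerode relation `s ≡_L t`: for every guarded string `g`,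
`s ◆ g` and `t ◆ g` are both undefined, or both defined and agree on membership in `L`. -/
def MN (L : Set (GString F V)) (s t : GPrefix F V) : Prop :=
  ∀ g : GString F V,
    (pconcat s g).isSome = (pconcat t g).isSome ∧
      ∀ x ∈ pconcat s g, ∀ y ∈ pconcat t g, (x ∈ L ↔ y ∈ L)

theorem mn_equivalence (L : Set (GString F V)) : Equivalence (MN L) := by
  constructor
  · intro s g
    refine ⟨rfl, fun x hx y hy => ?_⟩
    rw [Option.mem_def] at hx hy
    rw [hx, Option.some_inj] at hy
    subst hy
    exact Iff.rfl
  · intro s t h g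
    obtain ⟨h1, h2⟩ := h g
    exact ⟨h1.symm, fun x hx y hy => (h2 y hy x hx).symm⟩
  · intro s t u h h' g
    obtain ⟨h1, h2⟩ := h g
    obtain ⟨h3, h4⟩ := h' g
    refine ⟨h1.trans h3, fun x hx y hy => ?_⟩
    have hs : (pconcat t g).isSome := by
      rw [← h1]
      exact Option.isSome_iff_exists.mpr ⟨x, hx⟩
    obtain ⟨z, hz⟩ := Option.isSome_iff_exists.mp hs
    exact (h2 x hx z hz).trans (h4 z hz y hy)

/-- The setoid on prefixes given by the NetKAT Myhill–Nerode relation of `L`. -/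
def mnSetoid (L : Set (GString F V)) : Setoid (GPrefix F V) :=
  ⟨MN L, mn_equivalence L⟩

/-- A packet-state NetKAT automaton (PNKA) with state type `Q`,
including the spelling property. -/
structure PNKA (F V Q : Type) where
  q0 : Packet F V → Q
  tr : Q → Packet F V → Q
  obs : Q → Packet F V → Bool
  spell : ∀ (q q' : Q) (α β : Packet F V),
    (tr q α = tr q' β ∨ q0 α = q0 β ∨ q0 α = tr q β) → α = β

/-- Acceptance of a PNKA from a state. -/
def PNKA.run {Q : Type} (M : PNKA F V Q) : Q → List (Packet F V) → Packet F V → Bool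
  | q, [], β => M.obs q β
  | q, β :: m, γ => M.run (M.tr q β) m γ

/-- The language of a PNKA. -/
def PNKA.lang {Q : Type} (M : PNKA F V Q) : Set (GString F V) :=
  {g | M.run (M.q0 g.1) g.2.1 g.2.2 = true}

section Aux

open Classical

lemma lastP_concat (p : GPrefix F V) (β : Packet F V) :
    lastP (p.1, p.2 ++ [β]) = β := by
  simp [lastP]

lemma MN.lastP_eq {L : Set (GString F V)} {s t : GPrefix F V} (h : MN L s t) :
    lastP s = lastP t := by
  by_contra hne
  have h1 := (h (lastP s, [], lastP s)).1
  rw [pconcat, pconcat, if_pos rfl, if_neg (fun he => hne he.symm)] at h1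
  simp at h1

lemma pconcat_some {p : GPrefix F V} {g x : GString F V}
    (hx : pconcat p g = some x) :
    lastP p = g.1 ∧ x = (p.1, p.2 ++ g.2.1, g.2.2) := by
  by_cases hc : lastP p = g.1
  · rw [pconcat, if_pos hc, Option.some_inj] at hx
    exact ⟨hc, hx.symm⟩
  · rw [pconcat, if_neg hc] at hx
    exact absurd hx (by simp)

lemma mn_snoc {L : Set (GString F V)} {p p' : GPrefix F V} (h : MN L p p')
    (β : Packet F V) : MN L (p.1, p.2 ++ [β]) (p'.1, p'.2 ++ [β]) := by
  intro g
  by_cases hc : β = g.1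
  · have hl := h.lastP_eq
    have hp : pconcat (p.1, p.2 ++ [β]) g = some (p.1, (p.2 ++ [β]) ++ g.2.1, g.2.2) := by
      rw [pconcat, if_pos (by rw [lastP_concat]; exact hc)]
    have hp' : pconcat (p'.1, p'.2 ++ [β]) g = some (p'.1, (p'.2 ++ [β]) ++ g.2.1, g.2.2) := by
      rw [pconcat, if_pos (by rw [lastP_concat]; exact hc)]
    have hq : pconcat p (lastP p, β :: g.2.1, g.2.2) = some (p.1, p.2 ++ β :: g.2.1, g.2.2) := by
      rw [pconcat, if_pos rfl]
    have hq' : pconcat p' (lastP p, β :: g.2.1, g.2.2) = some (p'.1, p'.2 ++ β :: g.2.1, g.2.2) := by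
      rw [pconcat, if_pos hl.symm]
    refine ⟨by rw [hp, hp']; rfl, fun x hx y hy => ?_⟩
    rw [Option.mem_def, hp, Option.some_inj] at hx
    rw [Option.mem_def, hp', Option.some_inj] at hy
    subst hx; subst hy
    have := (h (lastP p, β :: g.2.1, g.2.2)).2 _ (Option.mem_def.mpr hq)
      _ (Option.mem_def.mpr hq')
    simpa [List.append_assoc] using this
  · have hp : pconcat (p.1, p.2 ++ [β]) g = none := by
      rw [pconcat, if_neg (by rw [lastP_concat]; exact hc)]
    have hp' : pconcat (p'.1, p'.2 ++ [β]) g = none := by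
      rw [pconcat, if_neg (by rw [lastP_concat]; exact hc)]
    refine ⟨by rw [hp, hp'], fun x hx => ?_⟩
    rw [Option.mem_def, hp] at hx
    exact absurd hx (by simp)

lemma mn_obs {L : Set (GString F V)} {p p' : GPrefix F V} (h : MN L p p')
    (β : Packet F V) : ((p.1, p.2, β) ∈ L) ↔ ((p'.1, p'.2, β) ∈ L) := by
  have hl := h.lastP_eq
  have hq : pconcat p (lastP p, [], β) = some (p.1, p.2, β) := by
    rw [pconcat, if_pos rfl]; simp
  have hq' : pconcat p' (lastP p, [], β) = some (p'.1, p'.2, β) := by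
    rw [pconcat, if_pos hl.symm]; simp
  exact (h (lastP p, [], β)).2 _ (Option.mem_def.mpr hq) _ (Option.mem_def.mpr hq')

/-- The transition function on Myhill-Nerode classes. -/
noncomputable def qtr (L : Set (GString F V)) (β : Packet F V) :
    Quotient (mnSetoid L) → Quotient (mnSetoid L) :=
  Quotient.lift (fun p => (⟦(p.1, p.2 ++ [β])⟧ : Quotient (mnSetoid L)))
    (fun _ _ h => Quotient.sound (mn_snoc h β))

/-- The last packet of a Myhill-Nerode class. -/
noncomputable def lastQ (L : Set (GString F V)) : Quotient (mnSetoid L) → Packet F V :=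
  Quotient.lift lastP (fun _ _ h => h.lastP_eq)

lemma lastQ_qtr (L : Set (GString F V)) (q : Quotient (mnSetoid L)) (β : Packet F V) :
    lastQ L (qtr L β q) = β := by
  induction q using Quotient.ind with
  | _ p => exact lastP_concat p β

lemma lastQ_mk (L : Set (GString F V)) (β : Packet F V) :
    lastQ L (⟦(β, [])⟧ : Quotient (mnSetoid L)) = β := rfl

/-- The quotient automaton of a language. -/
noncomputable def quotAut (L : Set (GString F V)) : PNKA F V (Quotient (mnSetoid L)) where
  q0 α := ⟦(α, [])⟧
  tr q β := qtr L β q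
  obs q β := Quotient.lift (fun p => decide ((p.1, p.2, β) ∈ L))
    (fun _ _ h => decide_eq_decide.mpr (mn_obs h β)) q
  spell := by
    intro q q' α β hcase
    rcases hcase with hc | hc | hc
    · have := congrArg (lastQ L) hc
      rwa [lastQ_qtr, lastQ_qtr] at this
    · have := congrArg (lastQ L) hc
      rwa [lastQ_mk, lastQ_mk] at this
    · have := congrArg (lastQ L) hc
      rwa [lastQ_mk, lastQ_qtr] at this

lemma quotAut_run (L : Set (GString F V)) (m : List (Packet F V)) :
    ∀ (β : Packet F V) (p : GPrefix F V),
      ((quotAut L).run ⟦p⟧ m β = true) ↔ (p.1, p.2 ++ m, β) ∈ L := by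
  induction m with
  | nil =>
    intro β p
    show (decide ((p.1, p.2, β) ∈ L) = true) ↔ _
    simp
  | cons γ m ih =>
    intro β p
    show ((quotAut L).run ⟦(p.1, p.2 ++ [γ])⟧ m β = true) ↔ _
    rw [ih β (p.1, p.2 ++ [γ])]
    simp [List.append_assoc]

section Forward

variable {Q : Type}

/-- The state reached by a prefix. -/
def stOf (M : PNKA F V Q) (p : GPrefix F V) : Q := p.2.foldl M.tr (M.q0 p.1)

lemma run_append (M : PNKA F V Q) (w : List (Packet F V)) :
    ∀ (q : Q) (m : List (Packet F V)) (β : Packet F V),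
      M.run q (w ++ m) β = M.run (w.foldl M.tr q) m β := by
  induction w with
  | nil => intro q m β; rfl
  | cons γ w ih => intro q m β; exact ih (M.tr q γ) m β

lemma stOf_shape (M : PNKA F V Q) (p : GPrefix F V) :
    stOf M p = M.q0 (lastP p) ∨ ∃ q, stOf M p = M.tr q (lastP p) := by
  rcases List.eq_nil_or_concat p.2 with hw | ⟨l, a, hw⟩
  · left
    rw [stOf, hw, lastP]
    rw [hw]
    rfl
  · right
    refine ⟨l.foldl M.tr (M.q0 p.1), ?_⟩
    rw [stOf, hw, List.concat_eq_append, List.foldl_append]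
    have : lastP p = a := by
      have := lastP_concat (p.1, l) a
      rw [lastP, hw, List.concat_eq_append]
      simpa [lastP] using this
    rw [this]
    rfl

lemma stOf_lastP (M : PNKA F V Q) {p p' : GPrefix F V}
    (h : stOf M p = stOf M p') : lastP p = lastP p' := by
  rcases stOf_shape M p with h1 | ⟨q1, h1⟩
  · rcases stOf_shape M p' with h2 | ⟨q2, h2⟩
    · rw [h1, h2] at h
      exact M.spell (M.q0 p.1) (M.q0 p.1) _ _ (Or.inr (Or.inl h))
    · rw [h1, h2] at h
      exact M.spell q2 q2 _ _ (Or.inr (Or.inr h))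
  · rcases stOf_shape M p' with h2 | ⟨q2, h2⟩
    · rw [h1, h2] at h
      exact (M.spell q1 q1 _ _ (Or.inr (Or.inr h.symm))).symm
    · rw [h1, h2] at h
      exact M.spell q1 q2 _ _ (Or.inl h)

lemma stOf_mn (M : PNKA F V Q) {L : Set (GString F V)} (hM : M.lang = L)
    {p p' : GPrefix F V} (h : stOf M p = stOf M p') : MN L p p' := by
  intro g
  have hl := stOf_lastP M h
  constructor
  · rw [pconcat, pconcat, hl]
    by_cases hcg : lastP p' = g.1
    · rw [if_pos hcg, if_pos hcg]; rfl
    · rw [if_neg hcg, if_neg hcg]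
  · intro x hx y hy
    obtain ⟨hcx, hex⟩ := pconcat_some (Option.mem_def.mp hx)
    obtain ⟨hcy, hey⟩ := pconcat_some (Option.mem_def.mp hy)
    subst hex; subst hey
    rw [← hM]
    show (M.run (M.q0 p.1) (p.2 ++ g.2.1) g.2.2 = true) ↔
      (M.run (M.q0 p'.1) (p'.2 ++ g.2.1) g.2.2 = true)
    rw [run_append, run_append]
    show (M.run (stOf M p) _ _ = true) ↔ (M.run (stOf M p') _ _ = true)
    rw [h]

end Forward

end Aux

/-- A language `L ⊆ GS` is accepted by some PNKA if and only
if the NetKAT Myhill–Nerode relation `≡_L` has finitely many equivalence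
classes. -/
theorem pnka_iff_mn_finite (L : Set (GString F V)) :
    (∃ (Q : Type) (_ : Finite Q) (M : PNKA F V Q), M.lang = L) ↔
      Finite (Quotient (mnSetoid L)) := by
  constructor
  · rintro ⟨Q, hQ, M, hM⟩
    refine Finite.of_injective (fun x => stOf M (Quotient.out x)) ?_
    intro x y h
    rw [← Quotient.out_eq x, ← Quotient.out_eq y]
    exact Quotient.sound (stOf_mn M hM h)
  · intro h
    refine ⟨Quotient (mnSetoid L), h, quotAut L, ?_⟩
    ext g
    show ((quotAut L).run (⟦(g.1, [])⟧ : Quotient (mnSetoid L)) g.2.1 g.2.2 = true) ↔ g ∈ L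
    rw [quotAut_run L g.2.1 g.2.2 (g.1, [])]
    simp

end NetKATLearn
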